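/- arXiv:0909.1612 — 6 statements merged into one kernel-verified Lean document; each statement's English description precedes it below -/
import Mathlib

section
/- For distinct nonnegative integers b_1 > b_2 > ... > b_n, the determinant of the n×n matrix whose (i,j) entry is the binomial coefficient C(b_{n+1-i}, j-1) equals (∏_{i<j}(b_i - b_j)) / (1! · 2! · ... · (n-1)!), and in particular it is a strictly positive integer. -/
/-!
Multiplying column `j` by `j!` turns `C(v, j)` into the falling factorial `v (v-1) ⋯ (v-j+1)`, a
monic polynomial of degree `j` in `v`; column operations then reduce the determinant to the
Vandermonde determinant `∏_{i<j} (v_j - v_i)` of the increasing sequence `v_i = b_{n+1-i}`.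
-/

open Finset Matrix Nat

lemma Matrix.det_vandermonde_natCast_eq_prod_factorial_mul_det_choose {n : ℕ} (v : Fin n → ℕ) :
    (vandermonde fun i => (v i : ℤ)).det =
      (∏ i : Fin n, ((i : ℕ)! : ℤ)) * (of fun i j : Fin n => ((v i).choose j : ℤ)).det := by
  rw [det_eval_matrixOfPolynomials_eq_det_vandermonde _ (fun i => descPochhammer ℤ i)
    (fun i => descPochhammer_natDegree ℤ i) (fun i => monic_descPochhammer ℤ i),
    ← det_mul_row]
  congr with i j
  simp only [of_apply, descPochhammer_eval_eq_descFactorial, descFactorial_eq_factorial_mul_choose,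
    cast_mul]

lemma Matrix.det_vandermonde_pos {R : Type*} [CommRing R] [LinearOrder R] [IsStrictOrderedRing R]
    {n : ℕ} {v : Fin n → R} (hv : StrictMono v) : 0 < (vandermonde v).det := by
  rw [det_vandermonde]
  exact prod_pos fun i _ => prod_pos fun j hj => sub_pos.mpr (hv (mem_Ioi.mp hj))

lemma Fin.prod_prod_Ioi_rev {M : Type*} [CommMonoid M] {n : ℕ} (f : Fin n → Fin n → M) :
    ∏ i : Fin n, ∏ j ∈ Ioi i, f j.rev i.rev = ∏ i, ∏ j ∈ Ioi i, f i j := by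
  rw [prod_sigma', prod_sigma']
  refine prod_nbij' (fun p => ⟨p.2.rev, p.1.rev⟩) (fun p => ⟨p.2.rev, p.1.rev⟩) ?_ ?_ ?_ ?_ ?_ <;>
    simp

theorem stmt0_general (n : ℕ) (b : Fin n → ℕ)
    (hb : ∀ i j : Fin n, i < j → b j < b i) :
    0 < (Matrix.of (fun i j : Fin n => ((b i.rev).choose j.val : ℤ))).det ∧
    ((Matrix.of (fun i j : Fin n => ((b i.rev).choose j.val : ℤ))).det : ℚ) =
      (∏ i : Fin n, ∏ j ∈ Finset.Ioi i, ((b i : ℚ) - (b j : ℚ))) /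
        (∏ i : Fin n, (Nat.factorial i.val : ℚ)) := by
  have hv : StrictMono fun i : Fin n => (b i.rev : ℤ) := fun i j hij =>
    Int.ofNat_lt.mpr (hb _ _ (Fin.rev_lt_rev.mpr hij))
  have hfact : 0 < ∏ i : Fin n, ((i : ℕ)! : ℤ) := prod_pos fun i _ => by positivity
  have hdet := det_vandermonde_natCast_eq_prod_factorial_mul_det_choose fun i => b i.rev
  refine ⟨pos_of_mul_pos_right (hdet ▸ det_vandermonde_pos hv) hfact.le, ?_⟩
  rw [eq_div_iff (by exact_mod_cast hfact.ne'), ← Fin.prod_prod_Ioi_rev]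
  rw [det_vandermonde] at hdet
  exact_mod_cast (mul_comm _ _).trans hdet.symm

theorem stmt0 (n : ℕ) (hn : 1 ≤ n) (b : Fin n → ℕ)
    (hb : ∀ i j : Fin n, i < j → b j < b i) :
    0 < (Matrix.of (fun i j : Fin n => ((b i.rev).choose j.val : ℤ))).det ∧
    ((Matrix.of (fun i j : Fin n => ((b i.rev).choose j.val : ℤ))).det : ℚ) =
      (∏ i : Fin n, ∏ j ∈ Finset.Ioi i, ((b i : ℚ) - (b j : ℚ))) /
        (∏ i : Fin n, (Nat.factorial i.val : ℚ)) :=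
  stmt0_general n b hb
end

section
/- Let Λ_n be the set of integer sequences λ_1 ≥ λ_2 ≥ ... ≥ λ_{n-1} ≥ λ_n = 0 with λ_i ≤ n-i for all i. For λ ∈ Λ_n, define a_i = n - i - λ_i and b_i = #{j : i < j ≤ n, λ_i - λ_j + i - j ∈ {0,1}}, and D(λ) = {(a_i, b_i) : 1 ≤ i ≤ n}. Then for every λ ∈ Λ_n, the n pairs (a_1,b_1),...,(a_n,b_n) are pairwise distinct. -/
/-- `l : Fin n → ℕ` (0-indexed) encodes `λ ∈ Λ_n`: weakly decreasing,
`λ_i ≤ n - i` (1-indexed, i.e. `l i + i ≤ n - 1` 0-indexed), with last term `0`. -/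
def IsLambda (n : ℕ) (l : Fin n → ℕ) : Prop :=
  (∀ i j : Fin n, i ≤ j → l j ≤ l i) ∧
  (∀ i : Fin n, l i + i.val ≤ n - 1) ∧
  (∀ i : Fin n, i.val = n - 1 → l i = 0)

/-- `a_i = n - i - λ_i`. -/
def aseq (n : ℕ) (l : Fin n → ℕ) (i : Fin n) : ℕ := n - 1 - i.val - l i

/-- `b_i = #{j : i < j ≤ n, λ_i - λ_j + i - j ∈ {0,1}}`. -/
def bseq (n : ℕ) (l : Fin n → ℕ) (i : Fin n) : ℕ :=
  (Finset.univ.filter (fun j : Fin n => i < j ∧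
    (l i + i.val = l j + j.val ∨ l i + i.val = l j + j.val + 1))).card

lemma baux (n : ℕ) (l : Fin n → ℕ) (i j : Fin n) (h : i < j)
    (hs : l i + i.val = l j + j.val) : bseq n l j < bseq n l i := by
  unfold bseq
  apply Finset.card_lt_card
  constructor
  · intro k hk
    simp only [Finset.mem_filter, Finset.mem_univ, true_and] at *
    obtain ⟨hjk, hc⟩ := hk
    exact ⟨h.trans hjk, by omega⟩
  · intro hsub
    have hj := hsub (Finset.mem_filter.mpr ⟨Finset.mem_univ j, h, Or.inl hs⟩)
    simp only [Finset.mem_filter, Finset.mem_univ, true_and] at hj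
    exact absurd hj.1 (lt_irrefl j)

theorem stmt2 (n : ℕ) (l : Fin n → ℕ) (hl : IsLambda n l) :
    Function.Injective (fun i : Fin n => (aseq n l i, bseq n l i)) := by
  obtain ⟨hmono, hbound, -⟩ := hl
  intro i j hij
  simp only [Prod.mk.injEq] at hij
  obtain ⟨ha, hb⟩ := hij
  have hi := hbound i
  have hj := hbound j
  have hi' := i.isLt
  have hj' := j.isLt
  have hs : l i + i.val = l j + j.val := by
    unfold aseq at ha; omega
  rcases lt_trichotomy i j with h | h | h
  · have := baux n l i j h hs; omega
  · exact h
  · have := baux n l j i h hs.symm; omega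
end

section
/- Let λ ∈ Λ_n and D(λ) = {(a_i,b_i)} as above. Then D(λ) satisfies: if (p,0) ∈ D(λ) for some p ∈ ℕ, then (i,0) ∈ D(λ) for all 0 ≤ i ≤ p. -/
/-- `D(λ) = {(a_i, b_i) : 1 ≤ i ≤ n}` as a finite set of points of `ℕ × ℕ`. -/
def Dof (n : ℕ) (l : Fin n → ℕ) : Finset (ℕ × ℕ) :=
  Finset.image (fun i => (aseq n l i, bseq n l i)) Finset.univ

/-- Discrete intermediate value theorem for `μ j = l j + j`. -/
lemma ivt (n : ℕ) (l : Fin n → ℕ) (hl : IsLambda n l) (v : ℕ) (hv : v ≤ n - 1) :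
    ∀ j : Fin n, l j + j.val ≤ v → ∃ j' : Fin n, j ≤ j' ∧ l j' + j'.val = v := by
  have key : ∀ d : ℕ, ∀ j : Fin n, n - 1 - j.val ≤ d → l j + j.val ≤ v →
      ∃ j' : Fin n, j ≤ j' ∧ l j' + j'.val = v := by
    intro d
    induction d with
    | zero =>
      intro j hd hle
      have hjl := j.isLt
      have hj : j.val = n - 1 := by omega
      have h0 := hl.2.2 j hj
      exact ⟨j, le_refl j, by omega⟩
    | succ d ih =>
      intro j hd hle
      by_cases h : l j + j.val = v
      · exact ⟨j, le_refl j, h⟩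
      · have hjl := j.isLt
        have hjlt : j.val + 1 < n := by
          by_contra hc
          have hj : j.val = n - 1 := by omega
          have h0 := hl.2.2 j hj
          omega
        have hmono := hl.1 j ⟨j.val + 1, hjlt⟩ (by simp [Fin.le_def])
        obtain ⟨j', hj', hv'⟩ := ih ⟨j.val + 1, hjlt⟩ (by simp; omega) (by simp; omega)
        exact ⟨j', le_trans (by simp [Fin.le_def]) hj', hv'⟩
  intro j hle
  exact key (n - 1 - j.val) j le_rfl hle

/-- Condition (a): the bottom row of `D(λ)` is an initial segment. -/
theorem stmt3 (n : ℕ) (l : Fin n → ℕ) (hl : IsLambda n l) :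
    ∀ p i : ℕ, (p, 0) ∈ Dof n l → i ≤ p → (i, 0) ∈ Dof n l := by
  intro p i hp hip
  simp only [Dof, Finset.mem_image, Finset.mem_univ, true_and, Prod.mk.injEq] at hp ⊢
  obtain ⟨k, hka, _⟩ := hp
  have hmuk := hl.2.1 k
  have hkl := k.isLt
  have hka' : p + (l k + k.val) = n - 1 := by
    simp only [aseq] at hka; omega
  set v := n - 1 - i with hvdef
  have hv : v ≤ n - 1 := by omega
  obtain ⟨j', hj'1, hj'2⟩ := ivt n l hl v hv k (by omega)
  set S := Finset.univ.filter (fun j : Fin n => l j + j.val = v) with hS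
  have hne : S.Nonempty := ⟨j', by simp [hS, hj'2]⟩
  set k' := S.max' hne with hk'
  have hk'S : k' ∈ S := S.max'_mem hne
  have hk'v : l k' + k'.val = v := by simpa [hS] using hk'S
  refine ⟨k', ?_, ?_⟩
  · have := k'.isLt
    simp only [aseq]; omega
  · rw [bseq, Finset.card_eq_zero, Finset.filter_eq_empty_iff]
    rintro j - ⟨hlt, hor⟩
    rcases hor with h | h
    · have : j ∈ S := by simp [hS]; omega
      exact absurd (S.le_max' j this) (not_le.mpr hlt)
    · obtain ⟨j'', hj''1, hj''2⟩ := ivt n l hl v hv j (by omega)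
      have : j'' ∈ S := by simp [hS, hj''2]
      have hle := S.le_max' j'' this
      exact absurd (lt_of_lt_of_le hlt hj''1) (not_lt.mpr hle)
end

section
/- Let λ ∈ Λ_n and D(λ) = {(a_i,b_i)} as above. Then for any p ∈ ℕ with {j : (p,j) ∈ D(λ)} nonempty, #{j : (p+1,j) ∈ D(λ)} + #{j : (p,j) ∈ D(λ)} ≥ max{j : (p,j) ∈ D(λ)} + 1; and if {j : (p,j) ∈ D(λ)} is empty then no element (x,y) ∈ D(λ) has x ≥ p. -/
/-- The `p`-th column of `D`. -/
def col (D : Finset (ℕ × ℕ)) (p : ℕ) : Finset (ℕ × ℕ) :=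
  D.filter (fun q => q.1 = p)

theorem Nat.exists_eq_of_le_of_le_of_forall_le_succ_add_one {f : ℕ → ℕ} {i m p : ℕ}
    (him : i ≤ m) (hf : ∀ k, i ≤ k → k < m → f k ≤ f (k + 1) + 1)
    (hi : p ≤ f i) (hm : f m ≤ p) : ∃ k, i ≤ k ∧ k ≤ m ∧ f k = p := by
  induction m, him using Nat.le_induction with
  | base => exact ⟨i, le_rfl, le_rfl, le_antisymm hm hi⟩
  | succ m him ih =>
    by_cases hfm : f m ≤ p
    · obtain ⟨k, hik, hkm, hk⟩ := ih (fun k hik hkm => hf k hik (by omega)) hfm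
      exact ⟨k, hik, by omega, hk⟩
    · have := hf m him (by omega)
      exact ⟨m + 1, by omega, le_rfl, by omega⟩

theorem col_Dof (n : ℕ) (l : Fin n → ℕ) (p : ℕ) :
    col (Dof n l) p =
      (Finset.univ.filter (fun i => aseq n l i = p)).image (fun i => (aseq n l i, bseq n l i)) :=
  Finset.filter_image

namespace IsLambda

variable {n : ℕ} {l : Fin n → ℕ}

theorem aseq_add (hl : IsLambda n l) (i : Fin n) : aseq n l i + (l i + i.val) = n - 1 := by
  have := hl.2.1 i
  unfold aseq
  omega

theorem bseq_eq_card (hl : IsLambda n l) (i : Fin n) :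
    bseq n l i = (Finset.univ.filter (fun j => i < j ∧
      (aseq n l j = aseq n l i ∨ aseq n l j = aseq n l i + 1))).card := by
  unfold bseq
  congr 1
  ext j
  have := hl.aseq_add i
  have := hl.aseq_add j
  simp only [Finset.mem_filter, Finset.mem_univ, true_and]
  omega

theorem bseq_lt_bseq (hl : IsLambda n l) {i j : Fin n} (hij : i < j)
    (hE : aseq n l i = aseq n l j) : bseq n l j < bseq n l i := by
  rw [hl.bseq_eq_card, hl.bseq_eq_card, hE]
  apply Finset.card_lt_card
  refine Finset.ssubset_iff_of_subset ?_ |>.2 ⟨j, by simp [hij], by simp⟩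
  intro k
  simp only [Finset.mem_filter, Finset.mem_univ, true_and]
  exact fun hk => ⟨hij.trans hk.1, hk.2⟩

theorem bseq_injOn (hl : IsLambda n l) (p : ℕ) :
    Set.InjOn (bseq n l) {i | aseq n l i = p} := by
  intro i hi j hj hb
  have hE : aseq n l i = aseq n l j := hi.trans hj.symm
  by_contra hne
  rcases lt_or_gt_of_ne hne with h | h
  · exact (hl.bseq_lt_bseq h hE).ne' hb
  · exact (hl.bseq_lt_bseq h hE.symm).ne hb

theorem card_col_Dof (hl : IsLambda n l) (p : ℕ) :
    (col (Dof n l) p).card = (Finset.univ.filter (fun i => aseq n l i = p)).card := by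
  rw [col_Dof]
  refine Finset.card_image_of_injOn fun i hi j hj hij => hl.bseq_injOn p ?_ ?_ ?_
  · simpa using hi
  · simpa using hj
  · exact congrArg Prod.snd hij

theorem bseq_add_one_le (hl : IsLambda n l) (i : Fin n) :
    bseq n l i + 1 ≤ (Finset.univ.filter (fun j => aseq n l j = aseq n l i + 1)).card +
      (Finset.univ.filter (fun j => aseq n l j = aseq n l i)).card := by
  rw [hl.bseq_eq_card, ← Finset.card_insert_of_notMem (a := i) (by simp)]
  calc _ ≤ (Finset.univ.filter (fun j => aseq n l j = aseq n l i + 1 ∨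
        aseq n l j = aseq n l i)).card := by
        apply Finset.card_le_card
        intro j
        simp only [Finset.mem_insert, Finset.mem_filter, Finset.mem_univ, true_and]
        rintro (rfl | ⟨-, h⟩) <;> tauto
    _ ≤ _ := by
        rw [Finset.filter_or]
        exact Finset.card_union_le _ _

theorem exists_aseq_eq (hl : IsLambda n l) {p : ℕ} (i : Fin n) (hp : p ≤ aseq n l i) :
    ∃ j, aseq n l j = p := by
  have hin := i.isLt
  let f : ℕ → ℕ := fun k => if h : k < n then aseq n l ⟨k, h⟩ else 0
  have hf : ∀ k : Fin n, f k = aseq n l k := fun k => dif_pos k.isLt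
  have hlast : f (n - 1) = 0 := by
    have hn : n - 1 < n := by omega
    rw [hf ⟨n - 1, hn⟩]
    simp [aseq, hl.2.2 ⟨n - 1, hn⟩ rfl]
  have hstep : ∀ k, i.val ≤ k → k < n - 1 → f k ≤ f (k + 1) + 1 := by
    intro k _ hk
    have hmono := hl.1 ⟨k, by omega⟩ ⟨k + 1, by omega⟩ (Fin.mk_le_mk.2 (by omega))
    have h₀ : aseq n l ⟨k, _⟩ + (l ⟨k, _⟩ + k) = n - 1 := hl.aseq_add ⟨k, by omega⟩
    have h₁ : aseq n l ⟨k + 1, _⟩ + (l ⟨k + 1, _⟩ + (k + 1)) = n - 1 :=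
      hl.aseq_add ⟨k + 1, by omega⟩
    rw [hf ⟨k, by omega⟩, hf ⟨k + 1, by omega⟩]
    omega
  obtain ⟨k, -, hk, hfk⟩ := Nat.exists_eq_of_le_of_le_of_forall_le_succ_add_one
    (by omega) hstep (by rwa [hf i]) (hlast ▸ Nat.zero_le p)
  exact ⟨⟨k, by omega⟩, (hf ⟨k, by omega⟩).symm.trans hfk⟩

end IsLambda

/-- Condition (b) for `D(λ)`: if column `p` is nonempty then
`#(column (p+1)) + #(column p) ≥ max(column p) + 1`, and if column `p` is
empty then no point of `D(λ)` has first coordinate `≥ p`. -/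
theorem stmt4 (n : ℕ) (l : Fin n → ℕ) (hl : IsLambda n l) (p : ℕ) :
    ((col (Dof n l) p).Nonempty →
      ((col (Dof n l) p).image Prod.snd).sup id + 1 ≤
        (col (Dof n l) (p + 1)).card + (col (Dof n l) p).card) ∧
    (col (Dof n l) p = ∅ → ∀ q ∈ Dof n l, q.1 < p) := by
  constructor
  · intro hne
    obtain ⟨b, hb, hsup⟩ := Finset.exists_mem_eq_sup _ (hne.image Prod.snd) id
    rw [col_Dof] at hb
    obtain ⟨i, rfl, rfl⟩ : ∃ i, aseq n l i = p ∧ bseq n l i = b := by simpa using hb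
    rw [hsup, hl.card_col_Dof, hl.card_col_Dof]
    exact hl.bseq_add_one_le i
  · intro hemp q hq
    obtain ⟨i, -, rfl⟩ := Finset.mem_image.1 hq
    by_contra hle
    obtain ⟨j, hj⟩ := hl.exists_aseq_eq i (not_lt.1 hle)
    have : (aseq n l j, bseq n l j) ∈ col (Dof n l) p := by
      rw [col_Dof]
      exact Finset.mem_image_of_mem _ (by simpa using hj)
    simp [hemp] at this
end

section
/- For every n ≥ 1, the number of elements of 𝔇_n^{catalan} equals the Catalan number C_n = (1/(n+1))·C(2n,n). -/
/-- Membership in `𝔇_n^{catalan}`. -/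
def IsCat (n : ℕ) (D : Finset (ℕ × ℕ)) : Prop :=
  D.card = n ∧
  (∀ p i : ℕ, (p, 0) ∈ D → i ≤ p → (i, 0) ∈ D) ∧
  (∀ p : ℕ,
    ((col D p).Nonempty →
      ((col D p).image Prod.snd).sup id + 1 ≤ (col D (p + 1)).card + (col D p).card) ∧
    (col D p = ∅ → ∀ q ∈ D, q.1 < p))


/-!
A finite set `D` is determined by its columns `columns D p = {j | (p, j) ∈ D}`, and `IsCat` says
that these form a *profile*: writing `c_p` for the size of column `p`, the column is a subset of
`[0, c_p + c_{p+1})` containing `0`, and the nonempty columns come first. Read column `p` as a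
word of length `c_p + c_{p+1}` in which each member is a node at depth `p + 1` of a plane tree
and the non-members following it are its children; a profile of weight `n` is then the
breadth-first description of a plane tree with `n + 1` nodes.

Such trees obey the Catalan recursion: removing the subtree of the first child of the root
leaves a smaller tree. On profiles, hanging `f` below a new first child of the root of `g`
(`node f g`) shifts each column of `g` behind the corresponding column of `f`. It is undone by
cutting every column where the nodes of the first subtree end; their number in column `p + 1`
is the number of non-members before the cut in column `p`.
-/

namespace CatalanProfile

open Finset

section cut

variable {s : Finset ℕ} {L a v : ℕ}

/-- For `s ⊆ [0, L)` and `a ≤ #s`, the `a`-th element of `s`, or `L` if `a = #s`. -/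
noncomputable def cut (s : Finset ℕ) (L a : ℕ) : ℕ := Nat.nth (fun x => x ∈ s ∨ L ≤ x) a

lemma infinite_setOf_mem_or_le : {x | x ∈ s ∨ L ≤ x}.Infinite :=
  (Set.Ici_infinite L).mono fun _ hx => Or.inr hx

lemma count_mem_or_le (hv : v ≤ L) :
    Nat.count (fun x => x ∈ s ∨ L ≤ x) v = #(s.filter (· < v)) := by
  rw [Nat.count_eq_card_filter_range]
  congr 1
  ext x
  simp only [mem_filter, mem_range]
  constructor
  · rintro ⟨hxv, hx | hx⟩ <;> [exact ⟨hx, hxv⟩; omega]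
  · rintro ⟨hx, hxv⟩
    exact ⟨hxv, Or.inl hx⟩

variable (hs : ∀ x ∈ s, x < L)
include hs

lemma cut_eq (hv : v ∈ s ∨ v = L) (hc : #(s.filter (· < v)) = a) : cut s L a = v := by
  have hvL : v ≤ L := hv.elim (fun h => (hs v h).le) le_of_eq
  rw [cut, ← hc, ← count_mem_or_le hvL]
  exact Nat.nth_count (hv.imp_right ge_of_eq)

lemma cut_card : cut s L #s = L :=
  cut_eq hs (Or.inr rfl) (by rw [filter_true_of_mem hs])

variable (ha : a ≤ #s)
include ha

lemma cut_le : cut s L a ≤ L := by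
  conv_rhs => rw [← cut_card hs]
  exact (Nat.nth_le_nth infinite_setOf_mem_or_le).2 ha

lemma card_filter_lt_cut : #(s.filter (· < cut s L a)) = a := by
  rw [← count_mem_or_le (cut_le hs ha)]
  exact Nat.count_nth_of_infinite infinite_setOf_mem_or_le a

lemma cut_mem : cut s L a ∈ s ∨ cut s L a = L :=
  (Nat.nth_mem_of_infinite infinite_setOf_mem_or_le a).imp_right (le_antisymm (cut_le hs ha))

lemma le_cut : a ≤ cut s L a := by
  calc a = #(s.filter (· < cut s L a)) := (card_filter_lt_cut hs ha).symm
    _ ≤ #(range (cut s L a)) := card_le_card fun x hx => mem_range.2 (mem_filter.1 hx).2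
    _ = cut s L a := card_range _

/-- Below the cut there are `a` elements of `s`, above it at most `L - cut` of them. -/
lemma cut_sub_le : cut s L a - a ≤ L - #s := by
  have hsplit := card_filter_add_card_filter_not (s := s) (p := (· < cut s L a))
  have habove : #(s.filter (¬ · < cut s L a)) ≤ L - cut s L a := by
    rw [← Nat.card_Ico]
    exact card_le_card fun x hx => by
      simp only [mem_filter, not_lt] at hx
      exact mem_Ico.2 ⟨hx.2, hs x hx.1⟩
  have := card_filter_lt_cut hs ha
  have := cut_le hs ha
  omega

end cut

variable {f g : ℕ → Finset ℕ} {n m : ℕ}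

def span (f : ℕ → Finset ℕ) (p : ℕ) : ℕ := #(f p) + #(f (p + 1))

structure IsProfile (f : ℕ → Finset ℕ) : Prop where
  lt_span : ∀ p, ∀ x ∈ f p, x < span f p
  zero_mem : ∀ p, (f p).Nonempty → 0 ∈ f p
  succ_eq_empty : ∀ p, f p = ∅ → f (p + 1) = ∅

def EmptyFrom (f : ℕ → Finset ℕ) (k : ℕ) : Prop := ∀ p, k ≤ p → f p = ∅

def HasWeight (f : ℕ → Finset ℕ) (n : ℕ) : Prop :=
  ∃ k, EmptyFrom f k ∧ ∑ p ∈ range k, #(f p) = n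

lemma IsProfile.eq_empty_of_le (hf : IsProfile f) {p q : ℕ} (hp : f p = ∅) (hpq : p ≤ q) :
    f q = ∅ := by
  induction q, hpq using Nat.le_induction with
  | base => exact hp
  | succ q _ ih => exact hf.succ_eq_empty q ih

lemma EmptyFrom.sum_range_eq {k K : ℕ} (hk : EmptyFrom f k) (hkK : k ≤ K) :
    ∑ p ∈ range K, #(f p) = ∑ p ∈ range k, #(f p) :=
  (sum_subset (range_subset_range.2 hkK) fun p _ hp => by
    rw [hk p (by simpa using hp), card_empty]).symm

lemma HasWeight.unique (hn : HasWeight f n) (hm : HasWeight f m) : n = m := by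
  obtain ⟨k, hk, rfl⟩ := hn
  obtain ⟨l, hl, rfl⟩ := hm
  rw [← hk.sum_range_eq (le_max_left k l), ← hl.sum_range_eq (le_max_right k l)]

lemma eq_empty_of_hasWeight_zero (hf : HasWeight f 0) (p : ℕ) : f p = ∅ := by
  obtain ⟨k, hk, hsum⟩ := hf
  by_cases hpk : k ≤ p
  · exact hk p hpk
  · exact card_eq_zero.1 ((sum_eq_zero_iff.1 hsum) p (mem_range.2 (by omega)))

/-! ### Grafting a tree below the root of another one -/

def consZero (f : ℕ → Finset ℕ) : ℕ → Finset ℕ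
  | 0 => {0}
  | p + 1 => f p

def overlay (t g : ℕ → Finset ℕ) (p : ℕ) : Finset ℕ := t p ∪ (g p).image (· + span t p)

def node (f g : ℕ → Finset ℕ) : ℕ → Finset ℕ := overlay (consZero f) g

lemma IsProfile.consZero (hf : IsProfile f) : IsProfile (consZero f) where
  lt_span
    | 0, x, hx => by simp_all [CatalanProfile.consZero, span]
    | p + 1, x, hx => hf.lt_span p x hx
  zero_mem
    | 0, _ => mem_singleton_self 0
    | p + 1, hp => hf.zero_mem p hp
  succ_eq_empty
    | 0, h => absurd h (singleton_ne_empty 0)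
    | p + 1, h => hf.succ_eq_empty p h

lemma HasWeight.consZero (hf : HasWeight f n) : HasWeight (consZero f) (n + 1) := by
  obtain ⟨k, hk, hsum⟩ := hf
  refine ⟨k + 1, fun p hp => ?_, ?_⟩
  · obtain ⟨q, rfl⟩ := Nat.exists_eq_add_of_le' (by omega : 1 ≤ p)
    exact hk q (by omega)
  · rw [sum_range_succ']
    simp [CatalanProfile.consZero, hsum]

lemma le_of_mem_image_add {s : Finset ℕ} {c y : ℕ} (hy : y ∈ s.image (· + c)) : c ≤ y := by
  obtain ⟨x, _, rfl⟩ := mem_image.1 hy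
  exact Nat.le_add_left c x

section overlay

variable {t : ℕ → Finset ℕ} (ht : IsProfile t)
include ht

lemma card_overlay (p : ℕ) : #(overlay t g p) = #(t p) + #(g p) := by
  rw [overlay, card_union_of_disjoint, card_image_of_injective _ (add_left_injective _)]
  exact disjoint_left.2 fun x hx hx' => (le_of_mem_image_add hx').not_gt (ht.lt_span p x hx)

lemma span_overlay (p : ℕ) : span (overlay t g) p = span t p + span g p := by
  simp only [span, card_overlay ht]
  omega

lemma IsProfile.overlay (hg : IsProfile g) : IsProfile (overlay t g) where
  lt_span p x hx := by
    rw [span_overlay ht]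
    rcases mem_union.1 hx with hx | hx
    · exact (ht.lt_span p x hx).trans_le (Nat.le_add_right _ _)
    · obtain ⟨y, hy, rfl⟩ := mem_image.1 hx
      have := hg.lt_span p y hy
      omega
  zero_mem p hp := by
    rcases (t p).eq_empty_or_nonempty with htp | htp
    · have hspan : span t p = 0 := by simp [span, htp, ht.succ_eq_empty p htp]
      have hgp : (g p).Nonempty := by simpa [CatalanProfile.overlay, htp] using hp
      exact mem_union_right _ (mem_image.2 ⟨0, hg.zero_mem p hgp, by rw [hspan]⟩)
    · exact mem_union_left _ (ht.zero_mem p htp)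
  succ_eq_empty p hp := by
    rw [CatalanProfile.overlay, union_eq_empty, image_eq_empty] at hp
    simp [CatalanProfile.overlay, ht.succ_eq_empty p hp.1, hg.succ_eq_empty p hp.2]

lemma HasWeight.overlay (htn : HasWeight t n) (hgm : HasWeight g m) :
    HasWeight (overlay t g) (n + m) := by
  obtain ⟨k, hk, rfl⟩ := htn
  obtain ⟨l, hl, rfl⟩ := hgm
  refine ⟨max k l, fun p hp => ?_, ?_⟩
  · simp [CatalanProfile.overlay, hk p (le_of_max_le_left hp), hl p (le_of_max_le_right hp)]
  · simp only [card_overlay ht, sum_add_distrib]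
    rw [hk.sum_range_eq (le_max_left k l), hl.sum_range_eq (le_max_right k l)]

end overlay

lemma IsProfile.node (hf : IsProfile f) (hg : IsProfile g) : IsProfile (node f g) :=
  hf.consZero.overlay hg

lemma HasWeight.node (hf : IsProfile f) (hfn : HasWeight f n)
    (hgm : HasWeight g m) : HasWeight (node f g) (n + m + 1) := by
  rw [add_right_comm]
  exact HasWeight.overlay hf.consZero hfn.consZero hgm

/-! ### Splitting off the subtree of the first child of the root -/

/-- The number of nodes of the first subtree of the root in column `p`. -/
noncomputable def topCount (f : ℕ → Finset ℕ) : ℕ → ℕ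
  | 0 => 1
  | p + 1 => cut (f p) (span f p) (topCount f p) - topCount f p

noncomputable def cutPoint (f : ℕ → Finset ℕ) (p : ℕ) : ℕ :=
  cut (f p) (span f p) (topCount f p)

noncomputable def top (f : ℕ → Finset ℕ) (p : ℕ) : Finset ℕ :=
  (f p).filter (· < cutPoint f p)

noncomputable def left (f : ℕ → Finset ℕ) (p : ℕ) : Finset ℕ := top f (p + 1)

noncomputable def right (f : ℕ → Finset ℕ) (p : ℕ) : Finset ℕ :=
  ((f p).filter (cutPoint f p ≤ ·)).image (· - cutPoint f p)

lemma topCount_succ (f : ℕ → Finset ℕ) (p : ℕ) :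
    topCount f (p + 1) = cutPoint f p - topCount f p := rfl

section split

variable (hf : IsProfile f)
include hf

lemma topCount_succ_eq_zero {p : ℕ} (h : topCount f p = 0) : topCount f (p + 1) = 0 := by
  have hcut : cutPoint f p = 0 := by
    refine cut_eq (hf.lt_span p) ?_ (by simp [h])
    rcases (f p).eq_empty_or_nonempty with hp | hp
    · simp [span, hp, hf.succ_eq_empty p hp]
    · exact Or.inl (hf.zero_mem p hp)
  rw [topCount_succ, hcut, Nat.zero_sub]

variable (h0 : (f 0).Nonempty)
include h0

lemma topCount_le_card (p : ℕ) : topCount f p ≤ #(f p) := by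
  induction p with
  | zero => exact h0.card_pos
  | succ p ih =>
    have := cut_sub_le (hf.lt_span p) ih
    have hspan : span f p - #(f p) = #(f (p + 1)) := by simp [span]
    rw [topCount_succ, cutPoint]
    omega

lemma cutPoint_eq (p : ℕ) : cutPoint f p = topCount f p + topCount f (p + 1) := by
  have := le_cut (hf.lt_span p) (topCount_le_card hf h0 p)
  rw [topCount_succ, cutPoint] at *
  omega

lemma card_top (p : ℕ) : #(top f p) = topCount f p :=
  card_filter_lt_cut (hf.lt_span p) (topCount_le_card hf h0 p)

lemma card_right (p : ℕ) : #(right f p) = #(f p) - topCount f p := by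
  rw [right, card_image_of_injOn fun x hx y hy hxy => by
    simp only [mem_coe, mem_filter] at hx hy hxy
    omega]
  have := card_filter_add_card_filter_not (s := f p) (p := (· < cutPoint f p))
  simp only [not_lt] at this
  rw [← card_top hf h0 p, top]
  omega

lemma IsProfile.left : IsProfile (left f) where
  lt_span p x hx := by
    rw [span, CatalanProfile.left, CatalanProfile.left, card_top hf h0, card_top hf h0,
      ← cutPoint_eq hf h0]
    exact (mem_filter.1 hx).2
  zero_mem p hp := by
    obtain ⟨x, hx⟩ := hp
    have hx := mem_filter.1 hx
    exact mem_filter.2 ⟨hf.zero_mem _ ⟨x, hx.1⟩, by omega⟩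
  succ_eq_empty p hp := by
    rw [← card_eq_zero, CatalanProfile.left, card_top hf h0] at hp ⊢
    exact topCount_succ_eq_zero hf hp

lemma IsProfile.right : IsProfile (right f) where
  lt_span p x hx := by
    obtain ⟨y, hy, rfl⟩ := mem_image.1 hx
    have hy := mem_filter.1 hy
    have := hf.lt_span p y hy.1
    have := topCount_le_card hf h0 p
    have := topCount_le_card hf h0 (p + 1)
    rw [span, card_right hf h0, card_right hf h0]
    rw [span, cutPoint_eq hf h0] at *
    omega
  zero_mem p hp := by
    obtain ⟨x, hx⟩ := hp
    obtain ⟨y, hy, -⟩ := mem_image.1 hx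
    have hy := mem_filter.1 hy
    have hmem : cutPoint f p ∈ f p := by
      refine (cut_mem (hf.lt_span p) (topCount_le_card hf h0 p)).resolve_right fun h => ?_
      have := hf.lt_span p y hy.1
      rw [cutPoint] at hy
      omega
    exact mem_image.2 ⟨_, mem_filter.2 ⟨hmem, le_rfl⟩, Nat.sub_self _⟩
  succ_eq_empty p hp := by
    rw [← card_eq_zero, card_right hf h0] at hp ⊢
    have := topCount_le_card hf h0 p
    have := topCount_le_card hf h0 (p + 1)
    have := cutPoint_eq hf h0 p
    have hcut : cutPoint f p = span f p := by
      rw [cutPoint, show topCount f p = #(f p) by omega]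
      exact cut_card (hf.lt_span p)
    rw [span] at hcut
    omega

lemma top_zero : top f 0 = {0} := by
  obtain ⟨x, hx⟩ := card_eq_one.1 (card_top hf h0 0)
  have h0mem : 0 ∈ top f 0 := mem_filter.2 ⟨hf.zero_mem 0 h0, by
    rw [cutPoint_eq hf h0]
    exact Nat.lt_of_lt_of_le Nat.one_pos (Nat.le_add_right _ _)⟩
  rw [hx, mem_singleton] at h0mem
  rw [hx, h0mem]

lemma span_top (p : ℕ) : span (top f) p = cutPoint f p := by
  rw [span, card_top hf h0, card_top hf h0, cutPoint_eq hf h0]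

lemma node_left_right : node (left f) (right f) = f := by
  have hcons : consZero (left f) = top f := by
    funext p
    cases p with
    | zero => exact (top_zero hf h0).symm
    | succ p => rfl
  funext p
  ext x
  rw [node, hcons, overlay, span_top hf h0, right, image_image, mem_union]
  simp only [top, mem_filter, mem_image, Function.comp_apply]
  constructor
  · rintro (⟨hx, -⟩ | ⟨y, ⟨hy, hle⟩, rfl⟩)
    · exact hx
    · rwa [Nat.sub_add_cancel hle]
  · intro hx
    by_cases hlt : x < cutPoint f p
    · exact Or.inl ⟨hx, hlt⟩
    · exact Or.inr ⟨x, ⟨hx, not_lt.1 hlt⟩, Nat.sub_add_cancel (not_lt.1 hlt)⟩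

lemma HasWeight.left_right (hn : HasWeight f n) :
    ∃ i j, HasWeight (left f) i ∧ HasWeight (right f) j ∧ i + j + 1 = n := by
  obtain ⟨k, hk, hsum⟩ := hn
  have hleft : HasWeight (left f) (∑ p ∈ range k, #(left f p)) :=
    ⟨k, fun p hp => by simp [CatalanProfile.left, top, hk (p + 1) (by omega)], rfl⟩
  have hright : HasWeight (right f) (∑ p ∈ range k, #(right f p)) :=
    ⟨k, fun p hp => by simp [CatalanProfile.right, hk p hp], rfl⟩
  have hnode := hleft.node (hf.left h0) hright
  rw [node_left_right hf h0] at hnode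
  exact ⟨_, _, hleft, hright, hnode.unique ⟨k, hk, hsum⟩⟩

end split

section splitOverlay

variable {t : ℕ → Finset ℕ} (ht : IsProfile t) (hg : IsProfile g)
include ht

lemma filter_overlay_lt (p : ℕ) : (overlay t g p).filter (· < span t p) = t p := by
  ext x
  simp only [overlay, mem_filter, mem_union]
  constructor
  · rintro ⟨hx | hx, hlt⟩
    · exact hx
    · exact absurd hlt (le_of_mem_image_add hx).not_gt
  · exact fun hx => ⟨Or.inl hx, ht.lt_span p x hx⟩

lemma filter_overlay_le (p : ℕ) :
    (overlay t g p).filter (span t p ≤ ·) = (g p).image (· + span t p) := by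
  ext x
  simp only [overlay, mem_filter, mem_union]
  constructor
  · rintro ⟨hx | hx, hle⟩
    · exact absurd (ht.lt_span p x hx) hle.not_gt
    · exact hx
  · exact fun hx => ⟨Or.inr hx, le_of_mem_image_add hx⟩

include hg

lemma cutPoint_overlay {p : ℕ} (hp : topCount (overlay t g) p = #(t p)) :
    cutPoint (overlay t g) p = span t p := by
  refine cut_eq ((ht.overlay hg).lt_span p) ?_ (by rw [filter_overlay_lt ht, hp])
  rcases (g p).eq_empty_or_nonempty with hgp | hgp
  · right
    rw [span_overlay ht]
    simp [span, hgp, hg.succ_eq_empty p hgp]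
  · exact Or.inl (mem_union_right _ (mem_image.2 ⟨0, hg.zero_mem p hgp, zero_add _⟩))

variable (ht0 : #(t 0) = 1)
include ht0

lemma topCount_overlay (p : ℕ) : topCount (overlay t g) p = #(t p) := by
  induction p with
  | zero => exact ht0.symm
  | succ p ih => rw [topCount_succ, cutPoint_overlay ht hg ih, ih, span, Nat.add_sub_cancel_left]

lemma top_overlay : top (overlay t g) = t := by
  funext p
  rw [top, cutPoint_overlay ht hg (topCount_overlay ht hg ht0 p), filter_overlay_lt ht]

lemma right_overlay : right (overlay t g) = g := by
  funext p
  rw [right, cutPoint_overlay ht hg (topCount_overlay ht hg ht0 p), filter_overlay_le ht,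
    image_image]
  convert image_id (s := g p)
  funext x
  exact Nat.add_sub_cancel x _

end splitOverlay

lemma left_node (hf : IsProfile f) (hg : IsProfile g) : left (node f g) = f :=
  funext fun p => congrFun (top_overlay hf.consZero hg (card_singleton 0)) (p + 1)

lemma right_node (hf : IsProfile f) (hg : IsProfile g) : right (node f g) = g :=
  right_overlay hf.consZero hg (card_singleton 0)

/-! ### Counting profiles -/

def ProfileOfWeight (n : ℕ) : Type := {f : ℕ → Finset ℕ // IsProfile f ∧ HasWeight f n}

instance : Unique (ProfileOfWeight 0) where
  default := ⟨fun _ => ∅, ⟨fun _ _ hx => absurd hx (notMem_empty _), fun _ hp => absurd hp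
    not_nonempty_empty, fun _ _ => rfl⟩, ⟨0, fun _ _ => rfl, rfl⟩⟩
  uniq f := Subtype.ext (funext (eq_empty_of_hasWeight_zero f.2.2))

lemma nonempty_zero_of_hasWeight_succ (hf : IsProfile f) (hn : HasWeight f (n + 1)) :
    (f 0).Nonempty := by
  by_contra h
  have hf0 : HasWeight f 0 :=
    ⟨0, fun p _ => hf.eq_empty_of_le (not_nonempty_iff_eq_empty.1 h) p.zero_le, rfl⟩
  exact absurd (hf0.unique hn) (Nat.succ_ne_zero n).symm

noncomputable def nodeEquiv (n : ℕ) :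
    (Σ i : Fin (n + 1), ProfileOfWeight i × ProfileOfWeight (n - i)) ≃
      ProfileOfWeight (n + 1) :=
  Equiv.ofBijective
    (fun x => ⟨node x.2.1.1 x.2.2.1, x.2.1.2.1.node x.2.2.2.1, by
      simpa [Nat.add_sub_cancel' (Nat.le_of_lt_succ x.1.isLt)] using
        x.2.1.2.2.node x.2.1.2.1 x.2.2.2.2⟩)
    ⟨by
      rintro ⟨i, ⟨f, hf⟩, ⟨g, hg⟩⟩ ⟨j, ⟨f', hf'⟩, ⟨g', hg'⟩⟩ h
      have h : node f g = node f' g' := congrArg Subtype.val h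
      obtain rfl : f = f' := by rw [← left_node hf.1 hg.1, h, left_node hf'.1 hg'.1]
      obtain rfl : g = g' := by rw [← right_node hf.1 hg.1, h, right_node hf'.1 hg'.1]
      obtain rfl : i = j := Fin.ext (hf.2.unique hf'.2)
      rfl,
    by
      rintro ⟨f, hf, hn⟩
      have h0 := nonempty_zero_of_hasWeight_succ hf hn
      obtain ⟨i, j, hi, hj, hij⟩ := hn.left_right hf h0
      refine ⟨⟨⟨i, by omega⟩, ⟨_, hf.left h0, hi⟩, ⟨_, hf.right h0, ?_⟩⟩,
        Subtype.ext (node_left_right hf h0)⟩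
      rwa [show n - i = j by omega]⟩

instance (n : ℕ) : Finite (ProfileOfWeight n) := by
  induction n using Nat.strong_induction_on with
  | _ n ih =>
    cases n with
    | zero => infer_instance
    | succ n =>
      have := fun i : Fin (n + 1) => ih i (by omega)
      have := fun i : Fin (n + 1) => ih (n - i) (by omega)
      exact Finite.of_equiv _ (nodeEquiv n)

lemma card_profileOfWeight (n : ℕ) : Nat.card (ProfileOfWeight n) = catalan n := by
  induction n using Nat.strong_induction_on with
  | _ n ih =>
    cases n with
    | zero => rw [Nat.card_unique, catalan_zero]
    | succ n =>
      rw [← Nat.card_congr (nodeEquiv n), Nat.card_sigma, catalan_succ]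
      refine sum_congr rfl fun i _ => ?_
      rw [Nat.card_prod, ih i (by omega), ih (n - i) (by omega)]

/-! ### Columns of a finite set of lattice points -/

def columns (D : Finset (ℕ × ℕ)) (p : ℕ) : Finset ℕ := (col D p).image Prod.snd

section columns

variable {D : Finset (ℕ × ℕ)}

lemma mem_columns {p j : ℕ} : j ∈ columns D p ↔ (p, j) ∈ D := by
  simp [columns, col]

lemma card_columns (p : ℕ) : #(columns D p) = #(col D p) :=
  card_image_of_injOn fun _ hx _ hy hxy =>
    Prod.ext ((mem_filter.1 hx).2.trans (mem_filter.1 hy).2.symm) hxy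

lemma columns_eq_empty {p : ℕ} : columns D p = ∅ ↔ col D p = ∅ := image_eq_empty

lemma hasWeight_columns (D : Finset (ℕ × ℕ)) : HasWeight (columns D) #D := by
  obtain ⟨k, hk⟩ : ∃ k, ∀ q ∈ D, q.1 < k :=
    ⟨D.sup Prod.fst + 1, fun q hq => Nat.lt_succ_of_le (le_sup (f := Prod.fst) hq)⟩
  refine ⟨k, fun p hp => eq_empty_of_forall_notMem fun j hj => ?_, ?_⟩
  · exact absurd (hk _ (mem_columns.1 hj)) (by omega)
  · simp only [card_columns, col]
    exact (card_eq_sum_card_fiberwise fun q hq => mem_range.2 (hk q hq)).symm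

lemma zero_mem_of_forall_lt_card {s : Finset ℕ} (hs : s.Nonempty) (h : ∀ x ∈ s, x < #s) :
    0 ∈ s := by
  rw [eq_of_subset_of_card_le (fun x hx => mem_range.2 (h x hx)) (card_range _).le]
  exact mem_range.2 hs.card_pos

lemma IsCat.isProfile_columns (h : IsCat n D) : IsProfile (columns D) := by
  obtain ⟨-, hrow, hcol⟩ := h
  have lt_span : ∀ p, ∀ x ∈ columns D p, x < span (columns D) p := fun p x hx => by
    have hsup := (hcol p).1 (image_nonempty.1 ⟨x, hx⟩)
    have := le_sup (f := id) hx
    rw [span, card_columns, card_columns]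
    simp only [columns, id] at hsup this ⊢
    omega
  refine ⟨lt_span, fun p ⟨x, hx⟩ => ?_, fun p hp => ?_⟩
  -- The last nonempty column `m` is followed by an empty one, so it is `[0, #(columns D m))`.
  · obtain ⟨q, hq, hmax⟩ := exists_mem_eq_sup D ⟨_, mem_columns.1 hx⟩ Prod.fst
    set m := D.sup Prod.fst
    have hm : (m, q.2) ∈ D := by rwa [hmax]
    have hnext : columns D (m + 1) = ∅ := eq_empty_of_forall_notMem fun j hj => by
      have : m + 1 ≤ m := le_sup (f := Prod.fst) (mem_columns.1 hj)
      omega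
    have h0 : 0 ∈ columns D m := zero_mem_of_forall_lt_card ⟨q.2, mem_columns.2 hm⟩
      fun y hy => by simpa [span, hnext] using lt_span m y hy
    exact mem_columns.2 (hrow m p (mem_columns.1 h0) (le_sup (f := Prod.fst) (mem_columns.1 hx)))
  · refine eq_empty_of_forall_notMem fun j hj => ?_
    exact absurd ((hcol p).2 (columns_eq_empty.1 hp) _ (mem_columns.1 hj)) (by simp)

lemma IsProfile.isCat (h : IsProfile (columns D)) : IsCat #D D := by
  refine ⟨rfl, fun p i hp hip => ?_, fun p => ⟨fun hp => ?_, fun hp q hq => ?_⟩⟩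
  · refine mem_columns.1 (h.zero_mem i (nonempty_iff_ne_empty.2 fun hi => ?_))
    have h0 := mem_columns.2 hp
    rw [h.eq_empty_of_le hi hip] at h0
    exact notMem_empty 0 h0
  · refine Nat.succ_le_of_lt ((Finset.sup_lt_iff ?_).2 fun x hx => ?_)
    · have := hp.card_pos
      rw [Nat.bot_eq_zero]
      omega
    · have := h.lt_span p x hx
      rwa [span, card_columns, card_columns, add_comm] at this
  · by_contra hle
    have hq : q.2 ∈ columns D q.1 := mem_columns.2 hq
    rw [h.eq_empty_of_le (columns_eq_empty.2 hp) (not_lt.1 hle)] at hq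
    exact notMem_empty _ hq

def ofColumns (f : ℕ → Finset ℕ) (k : ℕ) : Finset (ℕ × ℕ) :=
  (range k).biUnion fun p => (f p).image (Prod.mk p)

lemma columns_ofColumns {k : ℕ} (hk : EmptyFrom f k) : columns (ofColumns f k) = f := by
  funext p
  ext j
  rw [mem_columns]
  simp only [ofColumns, mem_biUnion, mem_range, mem_image, Prod.mk.injEq]
  constructor
  · rintro ⟨p, -, j, hj, rfl, rfl⟩
    exact hj
  · intro hj
    refine ⟨p, ?_, j, hj, rfl, rfl⟩
    by_contra hpk
    rw [hk p (not_lt.1 hpk)] at hj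
    exact notMem_empty j hj

end columns

noncomputable def columnsEquiv (n : ℕ) :
    {D : Finset (ℕ × ℕ) // IsCat n D} ≃ ProfileOfWeight n :=
  Equiv.ofBijective
    (fun D => ⟨columns D.1, IsCat.isProfile_columns D.2, by
      simpa only [D.2.1] using hasWeight_columns D.1⟩)
    ⟨fun D D' h => Subtype.ext <| by
      have h : columns D.1 = columns D'.1 := congrArg Subtype.val h
      ext ⟨p, j⟩
      rw [← mem_columns, h, mem_columns],
    fun ⟨f, hf, hn⟩ => by
      obtain ⟨k, hk, hsum⟩ := hn
      have hcol := columns_ofColumns hk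
      have hcard : #(ofColumns f k) = n :=
        (hasWeight_columns _).unique (by rw [hcol]; exact ⟨k, hk, hsum⟩)
      have hprof : IsProfile (columns (ofColumns f k)) := by rw [hcol]; exact hf
      exact ⟨⟨ofColumns f k, hcard ▸ hprof.isCat⟩, Subtype.ext hcol⟩⟩

end CatalanProfile

theorem stmt9_general (n : ℕ) :
    Nat.card {D : Finset (ℕ × ℕ) // IsCat n D} = (2 * n).choose n / (n + 1) := by
  rw [Nat.card_congr (CatalanProfile.columnsEquiv n), CatalanProfile.card_profileOfWeight,
    catalan_eq_centralBinom_div, Nat.centralBinom]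

/-- `#𝔇_n^{catalan}` equals the Catalan number `C(2n,n)/(n+1)`. -/
theorem stmt9 (n : ℕ) (hn : 1 ≤ n) :
    Nat.card {D : Finset (ℕ × ℕ) // IsCat n D} = (2 * n).choose n / (n + 1) :=
  stmt9_general n
end

section
/- For every n ≥ 1 and ℓ ≥ 1, the map sending D ∈ 𝔇_n^{catalan} to {(0,0),(1,0),...,(ℓ−1,0)} ∪ (D + (ℓ,0)) is an injection from 𝔇_n^{catalan} into 𝔇_{n+ℓ}^{catalan}, and it sends an element of bi-degree (d_1, d_2) to one of bi-degree (d_1 + C(ℓ,2) + nℓ, d_2). -/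
/-- `D ↦ {(0,0), …, (ℓ-1,0)} ∪ (D + (ℓ,0))`. -/
def shiftD (l : ℕ) (D : Finset (ℕ × ℕ)) : Finset (ℕ × ℕ) :=
  (Finset.range l).image (fun i => (i, 0)) ∪ D.image (fun q => (q.1 + l, q.2))

/-!
Below column `ℓ` the new diagram consists of the single points `(p, 0)`, each of which trivially
satisfies the column-counting condition; from column `ℓ` on it is `D` translated, so every
condition at column `m + ℓ` is the corresponding condition of `D` at column `m`. Translation is
injective and the two pieces are disjoint, so the bi-degree gains `0 + 1 + ⋯ + (ℓ - 1) = C(ℓ, 2)`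
from the bottom row and `ℓ` for each of the `n` translated points.
-/

open Finset

namespace Catalan

def BottomRowInitial (D : Finset (ℕ × ℕ)) : Prop :=
  ∀ p i : ℕ, (p, 0) ∈ D → i ≤ p → (i, 0) ∈ D

def ColumnCond (D : Finset (ℕ × ℕ)) (p : ℕ) : Prop :=
  ((col D p).Nonempty →
    ((col D p).image Prod.snd).sup id + 1 ≤ (col D (p + 1)).card + (col D p).card) ∧
  (col D p = ∅ → ∀ q ∈ D, q.1 < p)

lemma isCat_iff {n : ℕ} {D : Finset (ℕ × ℕ)} :
    IsCat n D ↔ D.card = n ∧ BottomRowInitial D ∧ ∀ p, ColumnCond D p :=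
  Iff.rfl

variable {l : ℕ} {D : Finset (ℕ × ℕ)}

lemma translate_injective (l : ℕ) : Function.Injective (fun q : ℕ × ℕ => (q.1 + l, q.2)) :=
  add_left_injective ((l, 0) : ℕ × ℕ)

lemma disjoint_bottomRow_translate (l : ℕ) (D : Finset (ℕ × ℕ)) :
    Disjoint ((range l).image (fun i => ((i, 0) : ℕ × ℕ))) (D.image (fun q => (q.1 + l, q.2))) := by
  simp only [disjoint_left, mem_image, mem_range]
  rintro _ ⟨i, hi, rfl⟩ ⟨q, -, hq⟩
  have := congrArg Prod.fst hq
  simp only at this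
  omega

lemma mem_shiftD_of_lt {p b : ℕ} (hp : p < l) : (p, b) ∈ shiftD l D ↔ b = 0 := by
  simp only [shiftD, mem_union, mem_image, mem_range, Prod.mk.injEq]
  constructor
  · rintro (⟨i, -, -, rfl⟩ | ⟨q, -, hq, -⟩)
    · rfl
    · omega
  · rintro rfl
    exact Or.inl ⟨p, hp, rfl, rfl⟩

lemma mem_shiftD_add {m b : ℕ} : (m + l, b) ∈ shiftD l D ↔ (m, b) ∈ D := by
  simp only [shiftD, mem_union, mem_image, mem_range, Prod.mk.injEq]
  constructor
  · rintro (⟨i, hi, hi', -⟩ | ⟨q, hq, h1, rfl⟩)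
    · omega
    · rwa [← Nat.add_right_cancel h1]
  · exact fun h => Or.inr ⟨(m, b), h, rfl, rfl⟩

lemma card_shiftD (l : ℕ) (D : Finset (ℕ × ℕ)) : (shiftD l D).card = D.card + l := by
  rw [shiftD, card_union_of_disjoint (disjoint_bottomRow_translate l D),
    card_image_of_injective _ (translate_injective l),
    card_image_of_injective _ fun _ _ h => congrArg Prod.fst h, card_range, add_comm]

lemma shiftD_injective (l : ℕ) : Function.Injective (shiftD l) := by
  intro D D' h
  ext ⟨m, b⟩
  rw [← mem_shiftD_add, h, mem_shiftD_add]

lemma sum_shiftD {M : Type*} [AddCommMonoid M] (l : ℕ) (D : Finset (ℕ × ℕ)) (f : ℕ × ℕ → M) :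
    ∑ q ∈ shiftD l D, f q = ∑ i ∈ range l, f (i, 0) + ∑ q ∈ D, f (q.1 + l, q.2) := by
  rw [shiftD, sum_union (disjoint_bottomRow_translate l D),
    sum_image fun _ _ _ _ h => congrArg Prod.fst h,
    sum_image fun _ _ _ _ h => translate_injective l h]

lemma sum_fst_shiftD (l : ℕ) (D : Finset (ℕ × ℕ)) :
    ∑ q ∈ shiftD l D, q.1 = ∑ q ∈ D, q.1 + l.choose 2 + D.card * l := by
  rw [sum_shiftD, sum_add_distrib, sum_const, smul_eq_mul, sum_range_id, Nat.choose_two_right]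
  ring

lemma sum_snd_shiftD (l : ℕ) (D : Finset (ℕ × ℕ)) :
    ∑ q ∈ shiftD l D, q.2 = ∑ q ∈ D, q.2 := by
  simp [sum_shiftD]

lemma col_shiftD_of_lt {p : ℕ} (hp : p < l) : col (shiftD l D) p = {(p, 0)} := by
  ext ⟨a, b⟩
  simp only [col, mem_filter, mem_singleton, Prod.mk.injEq]
  constructor
  · rintro ⟨h, rfl⟩
    exact ⟨rfl, (mem_shiftD_of_lt hp).1 h⟩
  · rintro ⟨rfl, rfl⟩
    exact ⟨(mem_shiftD_of_lt hp).2 rfl, rfl⟩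

lemma col_shiftD_add (m : ℕ) :
    col (shiftD l D) (m + l) = (col D m).image (fun q => (q.1 + l, q.2)) := by
  ext ⟨a, b⟩
  simp only [col, mem_filter, mem_image, Prod.mk.injEq, Prod.exists]
  constructor
  · rintro ⟨h, rfl⟩
    exact ⟨m, b, ⟨mem_shiftD_add.1 h, rfl⟩, rfl, rfl⟩
  · rintro ⟨_, _, ⟨h, rfl⟩, rfl, rfl⟩
    exact ⟨mem_shiftD_add.2 h, rfl⟩

lemma card_col_shiftD_add (m : ℕ) : (col (shiftD l D) (m + l)).card = (col D m).card := by
  rw [col_shiftD_add, card_image_of_injective _ (translate_injective l)]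

lemma image_snd_col_shiftD_add (m : ℕ) :
    (col (shiftD l D) (m + l)).image Prod.snd = (col D m).image Prod.snd := by
  rw [col_shiftD_add, image_image]
  rfl

lemma BottomRowInitial.shiftD (h : BottomRowInitial D) : BottomRowInitial (shiftD l D) := by
  intro p i hp hip
  rcases lt_or_ge i l with hil | hli
  · exact (mem_shiftD_of_lt hil).2 rfl
  obtain ⟨j, rfl⟩ := Nat.exists_eq_add_of_le' hli
  obtain ⟨m, rfl⟩ := Nat.exists_eq_add_of_le' (hli.trans hip)
  exact mem_shiftD_add.2 (h m j (mem_shiftD_add.1 hp) (by omega))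

lemma columnCond_shiftD_of_lt {p : ℕ} (hp : p < l) : ColumnCond (shiftD l D) p := by
  rw [ColumnCond, col_shiftD_of_lt hp]
  refine ⟨fun _ => ?_, fun h => absurd h (singleton_ne_empty _)⟩
  simp

lemma ColumnCond.shiftD_add {m : ℕ} (h : ColumnCond D m) : ColumnCond (shiftD l D) (m + l) := by
  refine ⟨fun hne => ?_, fun hemp => ?_⟩
  · rw [image_snd_col_shiftD_add, card_col_shiftD_add, Nat.add_right_comm, card_col_shiftD_add]
    rw [col_shiftD_add, image_nonempty] at hne
    exact h.1 hne
  · rw [col_shiftD_add, image_eq_empty] at hemp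
    intro q hq
    simp only [_root_.shiftD, mem_union, mem_image, mem_range] at hq
    rcases hq with ⟨i, hi, rfl⟩ | ⟨r, hr, rfl⟩
    · exact Nat.lt_add_left m hi
    · exact Nat.add_lt_add_right (h.2 hemp r hr) l

lemma IsCat.shiftD {n : ℕ} (h : IsCat n D) : IsCat (n + l) (shiftD l D) := by
  obtain ⟨hcard, hbottom, hcol⟩ := isCat_iff.1 h
  refine isCat_iff.2 ⟨by rw [card_shiftD, hcard], hbottom.shiftD, fun p => ?_⟩
  rcases lt_or_ge p l with hp | hp
  · exact columnCond_shiftD_of_lt hp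
  · obtain ⟨m, rfl⟩ := Nat.exists_eq_add_of_le' hp
    exact (hcol m).shiftD_add

end Catalan

open Catalan in
theorem stmt17_general (n l : ℕ) :
    (∀ D, IsCat n D → IsCat (n + l) (shiftD l D)) ∧
    Set.InjOn (shiftD l) {D : Finset (ℕ × ℕ) | IsCat n D} ∧
    (∀ D, IsCat n D →
      (∑ q ∈ shiftD l D, q.1) = (∑ q ∈ D, q.1) + l.choose 2 + n * l ∧
      (∑ q ∈ shiftD l D, q.2) = ∑ q ∈ D, q.2) :=
  ⟨fun _ h => h.shiftD, (shiftD_injective l).injOn,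
    fun D h => ⟨h.1 ▸ sum_fst_shiftD l D, sum_snd_shiftD l D⟩⟩

/-- The map `D ↦ {(0,0),…,(ℓ-1,0)} ∪ (D + (ℓ,0))` injects `𝔇_n^{catalan}` into
`𝔇_{n+ℓ}^{catalan}` and sends bi-degree `(d_1, d_2)` to `(d_1 + C(ℓ,2) + nℓ, d_2)`. -/
theorem stmt17 (n l : ℕ) (hn : 1 ≤ n) (hl : 1 ≤ l) :
    (∀ D, IsCat n D → IsCat (n + l) (shiftD l D)) ∧
    Set.InjOn (shiftD l) {D : Finset (ℕ × ℕ) | IsCat n D} ∧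
    (∀ D, IsCat n D →
      (∑ q ∈ shiftD l D, q.1) = (∑ q ∈ D, q.1) + l.choose 2 + n * l ∧
      (∑ q ∈ shiftD l D, q.2) = ∑ q ∈ D, q.2) :=
  stmt17_general n l
end
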